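/- arXiv:2505.13810 — 2 statements merged into one kernel-verified Lean document; each statement's English description precedes it below -/
import Mathlib

section
/- Generalized Wigner–Yanase skew information is additive over tensor products of local observables: for density operators ρ_i on H_i (i = 1,...,N) and Hermitian A_i on H_i, defining 𝐀_i = 𝕀^{⊗(i−1)} ⊗ A_i ⊗ 𝕀^{⊗(N−i)}, one has I^s(⊗_{i=1}^N ρ_i, Σ_{i=1}^N 𝐀_i) = Σ_{i=1}^N I^s(ρ_i, A_i). -/
open Matrix

/-- Power mean of order s ≤ 0 of two nonnegative reals, set to 0 when either argument vanishes
(and equal to the geometric mean when s = 0). -/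
noncomputable def powerMean (s a b : ℝ) : ℝ :=
  if a = 0 ∨ b = 0 then 0
  else if s = 0 then Real.sqrt (a * b)
  else ((a ^ s + b ^ s) / 2) ^ (1 / s)

/-- The operator 𝕀^{⊗(i−1)} ⊗ A ⊗ 𝕀^{⊗(N−i)} acting on (ℂ^d)^{⊗N}. -/
def localOp {N d : ℕ} (i : Fin N) (A : Matrix (Fin d) (Fin d) ℂ) :
    Matrix (Fin N → Fin d) (Fin N → Fin d) ℂ :=
  fun x y => if (∀ j, j ≠ i → x j = y j) then A (x i) (y i) else 0

namespace Stmt17Aux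

lemma rpow_inv_self {a s : ℝ} (ha : 0 ≤ a) (hs : s ≠ 0) : (a ^ s) ^ (1/s) = a := by
  rw [← Real.rpow_mul ha, mul_one_div_cancel hs, Real.rpow_one]

lemma powerMean_self (s : ℝ) {a : ℝ} (ha : 0 ≤ a) : powerMean s a a = a := by
  unfold powerMean
  by_cases h : a = 0
  · simp [h]
  · rw [if_neg (by tauto)]
    by_cases hs : s = 0
    · rw [if_pos hs, Real.sqrt_mul_self ha]
    · rw [if_neg hs]
      have : (a ^ s + a ^ s) / 2 = a ^ s := by ring
      rw [this, rpow_inv_self ha hs]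

lemma powerMean_smul (s : ℝ) {c a b : ℝ} (hc : 0 ≤ c) (ha : 0 ≤ a) (hb : 0 ≤ b) :
    powerMean s (c * a) (c * b) = c * powerMean s a b := by
  rcases eq_or_lt_of_le hc with h | hcpos
  · simp [powerMean, ← h]
  unfold powerMean
  by_cases h : a = 0 ∨ b = 0
  · rw [if_pos h, if_pos (by rcases h with h|h <;> simp [h])]; ring
  · push_neg at h
    have ha' : 0 < a := lt_of_le_of_ne ha (Ne.symm h.1)
    have hb' : 0 < b := lt_of_le_of_ne hb (Ne.symm h.2)
    rw [if_neg (by push_neg; constructor <;> positivity),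
      if_neg (c := a = 0 ∨ b = 0) (by push_neg; exact h)]
    by_cases hs : s = 0
    · rw [if_pos hs, if_pos hs, show c * a * (c * b) = (c*c)*(a*b) by ring,
        Real.sqrt_mul (by positivity), Real.sqrt_mul_self hc]
    · rw [if_neg hs, if_neg hs]
      rw [Real.mul_rpow hc ha, Real.mul_rpow hc hb]
      have h2 : c ^ s * a ^ s + c ^ s * b ^ s = c ^ s * ((a ^ s + b ^ s)) := by ring
      rw [h2, mul_div_assoc, Real.mul_rpow (by positivity) (by positivity),
        rpow_inv_self hc hs]

variable {N d : ℕ}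

lemma sum_prod_pi {β : Type*} [CommSemiring β] (h : Fin N → Fin d → β) :
    ∑ x : Fin N → Fin d, ∏ j, h j (x j) = ∏ j, ∑ m, h j m :=
  (Fintype.prod_sum h).symm

lemma sum_update_eq {β : Type*} [AddCommMonoid β] {x : Fin N → Fin d} {i : Fin N}
    (c : (Fin N → Fin d) → β) :
    ∑ y : Fin N → Fin d, (if (∀ j, j ≠ i → x j = y j) then c y else 0)
      = ∑ m, c (Function.update x i m) := by
  rw [← Finset.sum_filter]
  refine Finset.sum_nbij' (fun y => y i) (fun m => Function.update x i m) ?_ ?_ ?_ ?_ ?_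
  · intro a _; exact Finset.mem_univ _
  · intro m _
    simp only [Finset.mem_filter, Finset.mem_univ, true_and]
    intro j hj; rw [Function.update_of_ne hj]
  · intro y hy
    simp only [Finset.mem_filter, Finset.mem_univ, true_and] at hy
    show Function.update x i (y i) = y
    funext j
    by_cases hj : j = i
    · subst hj; simp
    · rw [Function.update_of_ne hj]; exact hy j hj
  · intro m _; show Function.update x i m i = m; simp
  · intro y hy
    simp only [Finset.mem_filter, Finset.mem_univ, true_and] at hy
    show c y = c (Function.update x i (y i))
    congr 1
    funext j
    by_cases hj : j = i
    · subst hj; simp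
    · rw [Function.update_of_ne hj]; exact (hy j hj).symm

lemma sum_ite_ne {β : Type*} [AddCommMonoid β] {γ : Type*} [Fintype γ] [DecidableEq γ]
    (x : γ) (h : γ → β) :
    ∑ g, (if g = x then 0 else h g) = ∑ g ∈ Finset.univ.erase x, h g := by
  rw [← Finset.add_sum_erase _ _ (Finset.mem_univ x), if_pos rfl, zero_add]
  exact Finset.sum_congr rfl fun g hg => if_neg (Finset.mem_erase.mp hg).1

/-- product over all sites of a per-site family -/
def P (v : Fin N → Fin d → ℂ) : (Fin N → Fin d) → ℂ := fun x => ∏ j, v j (x j)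

lemma P_split (v : Fin N → Fin d → ℂ) (i : Fin N) (x : Fin N → Fin d) :
    P v x = v i (x i) * ∏ j ∈ Finset.univ.erase i, v j (x j) :=
  (Finset.mul_prod_erase Finset.univ _ (Finset.mem_univ i)).symm

lemma localOp_mulVec (i : Fin N) (B : Matrix (Fin d) (Fin d) ℂ) (v : Fin N → Fin d → ℂ) :
    (localOp i B) *ᵥ (P v) = P (Function.update v i (B *ᵥ v i)) := by
  funext x
  show ∑ y, (if (∀ j, j ≠ i → x j = y j) then B (x i) (y i) else 0) * P v y = _
  simp only [ite_mul, zero_mul]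
  rw [sum_update_eq (fun y => B (x i) (y i) * P v y)]
  have hP : ∀ m, P v (Function.update x i m)
      = v i m * ∏ j ∈ Finset.univ.erase i, v j (x j) := by
    intro m
    rw [P_split v i, Function.update_self]
    congr 1
    exact Finset.prod_congr rfl fun j hj => by
      rw [Function.update_of_ne (Finset.mem_erase.mp hj).1]
  have hR : P (Function.update v i (B *ᵥ v i)) x
      = (B *ᵥ v i) (x i) * ∏ j ∈ Finset.univ.erase i, v j (x j) := by
    rw [P_split _ i, Function.update_self]
    congr 1
    exact Finset.prod_congr rfl fun j hj => by
      rw [Function.update_of_ne (Finset.mem_erase.mp hj).1]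
  simp only [hP, hR]
  rw [show (B *ᵥ v i) (x i) = ∑ m, B (x i) m * v i m from rfl, Finset.sum_mul]
  exact Finset.sum_congr rfl fun m _ => by rw [Function.update_self]; ring

lemma star_P_dot (v w : Fin N → Fin d → ℂ) :
    star (P v) ⬝ᵥ P w = ∏ j, (star (v j) ⬝ᵥ w j) := by
  simp only [dotProduct, Pi.star_apply, P, RCLike.star_def]
  rw [← sum_prod_pi (fun j m => (starRingEnd ℂ) (v j m) * w j m)]
  refine Finset.sum_congr rfl fun x _ => ?_
  rw [map_prod, ← Finset.prod_mul_distrib]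

lemma trace_vecMulVec_mul {α : Type*} [Fintype α] (v w : α → ℂ) (M : Matrix α α ℂ) :
    (vecMulVec v w * M).trace = w ⬝ᵥ (M *ᵥ v) := by
  simp only [trace, diag, mul_apply, vecMulVec_apply, dotProduct, mulVec]
  rw [Finset.sum_comm]
  refine Finset.sum_congr rfl fun y _ => ?_
  simp only [dotProduct, Finset.mul_sum]
  refine Finset.sum_congr rfl fun x _ => by ring

lemma sum_mulVec' {ι α : Type*} [Fintype α] (s : Finset ι)
    (M : ι → Matrix α α ℂ) (w : α → ℂ) :
    (∑ i ∈ s, M i) *ᵥ w = ∑ i ∈ s, (M i) *ᵥ w := by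
  funext x
  simp only [mulVec, dotProduct, Matrix.sum_apply, Finset.sum_mul, Finset.sum_apply]
  rw [Finset.sum_comm]

lemma mulVec_sum' {ι α : Type*} [Fintype α] (s : Finset ι)
    (M : Matrix α α ℂ) (w : ι → α → ℂ) :
    M *ᵥ (∑ i ∈ s, w i) = ∑ i ∈ s, M *ᵥ w i := by
  funext x
  simp only [mulVec, dotProduct, Finset.sum_apply, Finset.mul_sum]
  rw [Finset.sum_comm]

lemma dotProduct_sum' {ι α : Type*} [Fintype α] (s : Finset ι)
    (u : α → ℂ) (w : ι → α → ℂ) :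
    u ⬝ᵥ (∑ i ∈ s, w i) = ∑ i ∈ s, u ⬝ᵥ w i := by
  simp only [dotProduct, Finset.sum_apply, Finset.mul_sum]
  rw [Finset.sum_comm]

lemma trace_mix {ι α : Type*} [Fintype ι] [Fintype α] (c : ι → ℂ) (u : ι → α → ℂ)
    (B : Matrix α α ℂ) :
    ((∑ l, c l • vecMulVec (u l) (star (u l))) * B * B).trace
      = ∑ l, c l * (star (u l) ⬝ᵥ (B *ᵥ (B *ᵥ u l))) := by
  rw [Finset.sum_mul, Finset.sum_mul, trace_sum]
  refine Finset.sum_congr rfl fun l _ => ?_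
  rw [smul_mul_assoc, smul_mul_assoc, trace_smul, smul_eq_mul, mul_assoc,
    trace_vecMulVec_mul, mulVec_mulVec]

section Dots

variable (ψ : Fin N → Fin d → (Fin d → ℂ))
  (horth : ∀ i l l', star (ψ i l) ⬝ᵥ ψ i l' = if l = l' then 1 else 0)
  (A : Fin N → Matrix (Fin d) (Fin d) ℂ)

include horth in
lemma H1 (f g : Fin N → Fin d) :
    star (P fun j => ψ j (f j)) ⬝ᵥ ((∑ i, localOp i (A i)) *ᵥ P fun j => ψ j (g j))
      = ∑ i, (star (ψ i (f i)) ⬝ᵥ (A i *ᵥ ψ i (g i))) *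
          ∏ j ∈ Finset.univ.erase i, (if f j = g j then (1:ℂ) else 0) := by
  rw [sum_mulVec', dotProduct_sum']
  refine Finset.sum_congr rfl fun i _ => ?_
  rw [localOp_mulVec, star_P_dot,
    ← Finset.mul_prod_erase Finset.univ _ (Finset.mem_univ i)]
  simp only [Function.update_self]
  congr 1
  refine Finset.prod_congr rfl fun j hj => ?_
  rw [Function.update_of_ne (Finset.mem_erase.mp hj).1, horth]

include horth in
lemma H2 (f : Fin N → Fin d) :
    star (P fun j => ψ j (f j)) ⬝ᵥ
        ((∑ i, localOp i (A i)) *ᵥ ((∑ i, localOp i (A i)) *ᵥ P fun j => ψ j (f j)))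
      = (∑ i, star (ψ i (f i)) ⬝ᵥ (A i *ᵥ (A i *ᵥ ψ i (f i))))
        + ∑ i, ∑ i' ∈ Finset.univ.erase i,
            (star (ψ i (f i)) ⬝ᵥ (A i *ᵥ ψ i (f i))) *
              (star (ψ i' (f i')) ⬝ᵥ (A i' *ᵥ ψ i' (f i'))) := by
  set v : Fin N → Fin d → ℂ := fun j => ψ j (f j) with hv
  have key : ∀ i i' : Fin N,
      star (P v) ⬝ᵥ (localOp i (A i) *ᵥ (localOp i' (A i') *ᵥ P v))
        = if i = i' then star (ψ i (f i)) ⬝ᵥ (A i *ᵥ (A i *ᵥ ψ i (f i)))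
          else (star (ψ i (f i)) ⬝ᵥ (A i *ᵥ ψ i (f i))) *
              (star (ψ i' (f i')) ⬝ᵥ (A i' *ᵥ ψ i' (f i'))) := by
    intro i i'
    rw [localOp_mulVec, localOp_mulVec, star_P_dot]
    by_cases h : i = i'
    · subst h
      rw [if_pos rfl]
      simp only [Function.update_self, Function.update_idem]
      rw [← Finset.mul_prod_erase Finset.univ _ (Finset.mem_univ i),
        Function.update_self]
      have : ∀ j ∈ Finset.univ.erase i,
          star (v j) ⬝ᵥ (Function.update v i (A i *ᵥ (A i *ᵥ v i)) j) = 1 := by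
        intro j hj
        rw [Function.update_of_ne (Finset.mem_erase.mp hj).1, hv]
        simp only []
        rw [horth, if_pos rfl]
      rw [Finset.prod_congr rfl this, Finset.prod_const_one, mul_one]
    · rw [if_neg h]
      have hv_i : (Function.update v i' (A i' *ᵥ v i')) i = v i :=
        Function.update_of_ne h _ _
      rw [hv_i]
      rw [← Finset.mul_prod_erase Finset.univ _ (Finset.mem_univ i),
        Function.update_self,
        ← Finset.mul_prod_erase _ _
          (Finset.mem_erase.mpr ⟨Ne.symm h, Finset.mem_univ i'⟩)]
      have hui' : Function.update (Function.update v i' (A i' *ᵥ v i')) i (A i *ᵥ v i) i'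
          = A i' *ᵥ v i' := by
        rw [Function.update_of_ne (Ne.symm h), Function.update_self]
      rw [hui']
      have hrest : ∀ j ∈ (Finset.univ.erase i).erase i',
          star (v j) ⬝ᵥ
            (Function.update (Function.update v i' (A i' *ᵥ v i')) i (A i *ᵥ v i) j) = 1 := by
        intro j hj
        obtain ⟨hji', hji⟩ := Finset.mem_erase.mp hj
        have hji2 := (Finset.mem_erase.mp hji).1
        rw [Function.update_of_ne hji2, Function.update_of_ne hji', hv]
        simp only []
        rw [horth, if_pos rfl]
      rw [Finset.prod_congr rfl hrest, Finset.prod_const_one, mul_one]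
  rw [sum_mulVec' Finset.univ (fun i => localOp i (A i)) (P v), mulVec_sum']
  have : ∀ i' : Fin N, (∑ i, localOp i (A i)) *ᵥ (localOp i' (A i') *ᵥ P v)
      = ∑ i, localOp i (A i) *ᵥ (localOp i' (A i') *ᵥ P v) := fun i' => sum_mulVec' _ _ _
  rw [Finset.sum_congr rfl fun i' _ => this i', dotProduct_sum']
  have h2 : ∀ i' : Fin N, star (P v) ⬝ᵥ (∑ i, localOp i (A i) *ᵥ (localOp i' (A i') *ᵥ P v))
      = ∑ i, star (P v) ⬝ᵥ (localOp i (A i) *ᵥ (localOp i' (A i') *ᵥ P v)) :=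
    fun i' => dotProduct_sum' _ _ _
  rw [Finset.sum_congr rfl fun i' _ => h2 i', Finset.sum_comm]
  simp only [key]
  rw [← Finset.sum_add_distrib]
  refine Finset.sum_congr rfl fun i _ => ?_
  rw [← Finset.add_sum_erase _ _ (Finset.mem_univ i), if_pos rfl]
  congr 1
  exact Finset.sum_congr rfl fun i' hi' => if_neg (Ne.symm (Finset.mem_erase.mp hi').1)

end Dots


section Core

variable (s : ℝ) (lam : Fin N → Fin d → ℝ)

lemma hred1 (hlam : ∀ i l, 0 ≤ lam i l) (hlamsum : ∀ i, ∑ l, lam i l = 1)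
    (i : Fin N) (h : Fin d → ℝ) :
    ∑ f : Fin N → Fin d, (∏ j, lam j (f j)) * h (f i) = ∑ l, lam i l * h l := by
  classical
  set k : Fin N → Fin d → ℝ := Function.update (fun j => lam j) i (fun l => lam i l * h l)
    with hk
  have h1 : ∀ f : Fin N → Fin d, (∏ j, lam j (f j)) * h (f i) = ∏ j, k j (f j) := by
    intro f
    rw [← Finset.mul_prod_erase Finset.univ (fun j => k j (f j)) (Finset.mem_univ i),
      ← Finset.mul_prod_erase Finset.univ (fun j => lam j (f j)) (Finset.mem_univ i)]
    rw [hk]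
    simp only [Function.update_self]
    have hrest : ∏ j ∈ Finset.univ.erase i,
        (Function.update (fun j => lam j) i (fun l => lam i l * h l)) j (f j)
        = ∏ j ∈ Finset.univ.erase i, lam j (f j) :=
      Finset.prod_congr rfl fun j hj => by
        rw [Function.update_of_ne (Finset.mem_erase.mp hj).1]
    rw [hrest]
    ring
  rw [Finset.sum_congr rfl fun f _ => h1 f, sum_prod_pi,
    ← Finset.mul_prod_erase Finset.univ _ (Finset.mem_univ i), hk]
  simp only [Function.update_self]
  rw [Finset.prod_congr rfl (fun j hj => by
      rw [Function.update_of_ne (Finset.mem_erase.mp hj).1]),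
    Finset.prod_congr rfl (fun j (hj : j ∈ Finset.univ.erase i) => hlamsum j),
    Finset.prod_const_one, mul_one]

lemma hred2 (hlamsum : ∀ i, ∑ l, lam i l = 1) (i : Fin N) (W : Fin d → ℝ) :
    ∑ f : Fin N → Fin d, (∏ j ∈ Finset.univ.erase i, lam j (f j)) * W (f i) = ∑ l, W l := by
  classical
  set k : Fin N → Fin d → ℝ := Function.update (fun j => lam j) i W with hk
  have h1 : ∀ f : Fin N → Fin d, (∏ j ∈ Finset.univ.erase i, lam j (f j)) * W (f i)
      = ∏ j, k j (f j) := by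
    intro f
    rw [← Finset.mul_prod_erase Finset.univ (fun j => k j (f j)) (Finset.mem_univ i), hk]
    simp only [Function.update_self]
    have hrest : ∏ j ∈ Finset.univ.erase i,
        (Function.update (fun j => lam j) i W) j (f j)
        = ∏ j ∈ Finset.univ.erase i, lam j (f j) :=
      Finset.prod_congr rfl fun j hj => by
        rw [Function.update_of_ne (Finset.mem_erase.mp hj).1]
    rw [hrest]
    ring
  rw [Finset.sum_congr rfl fun f _ => h1 f, sum_prod_pi,
    ← Finset.mul_prod_erase Finset.univ _ (Finset.mem_univ i), hk]
  simp only [Function.update_self]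
  rw [Finset.prod_congr rfl (fun j hj => by
      rw [Function.update_of_ne (Finset.mem_erase.mp hj).1]),
    Finset.prod_congr rfl (fun j (hj : j ∈ Finset.univ.erase i) => hlamsum j),
    Finset.prod_const_one, mul_one]

lemma core (hlam : ∀ i l, 0 ≤ lam i l) (hlamsum : ∀ i, ∑ l, lam i l = 1)
    (a : Fin N → Fin d → Fin d → ℂ) (er qr : Fin N → Fin d → ℝ)
    (haer : ∀ i l, a i l l = ((er i l : ℝ) : ℂ)) :
    (∑ f : Fin N → Fin d, (∏ i, lam i (f i)) *
        ((∑ i, qr i (f i)) + ∑ i, ∑ i' ∈ Finset.univ.erase i, er i (f i) * er i' (f i')))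
      - ∑ f : Fin N → Fin d, ∑ g : Fin N → Fin d,
          powerMean s (∏ i, lam i (f i)) (∏ i, lam i (g i)) *
            ‖∑ i, a i (f i) (g i) *
                ∏ j ∈ Finset.univ.erase i, (if f j = g j then (1:ℂ) else 0)‖ ^ 2
      = ∑ i, (∑ l, lam i l * qr i l
          - ∑ l, ∑ m, powerMean s (lam i l) (lam i m) * ‖a i l m‖ ^ 2) := by
  classical
  set Λ : (Fin N → Fin d) → ℝ := fun f => ∏ i, lam i (f i) with hΛ
  have hΛpos : ∀ f, 0 ≤ Λ f := fun f => Finset.prod_nonneg fun j _ => hlam j (f j)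
  set U : (Fin N → Fin d) → Fin N → Fin d → ℝ := fun f i m =>
    (∏ j ∈ Finset.univ.erase i, lam j (f j)) *
      (powerMean s (lam i (f i)) (lam i m) * ‖a i (f i) m‖ ^ 2) with hU
  -- diagonal value
  have hdiag : ∀ f : Fin N → Fin d,
      powerMean s (Λ f) (Λ f) *
        ‖∑ i, a i (f i) (f i) *
            ∏ j ∈ Finset.univ.erase i, (if f j = f j then (1:ℂ) else 0)‖ ^ 2
      = Λ f * (∑ i, er i (f i)) ^ 2 := by
    intro f
    have h1 : ∀ i : Fin N,
        ∏ j ∈ Finset.univ.erase i, (if f j = f j then (1:ℂ) else 0) = 1 :=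
      fun i => Finset.prod_eq_one fun j _ => if_pos rfl
    have h2 : (∑ i, a i (f i) (f i) *
          ∏ j ∈ Finset.univ.erase i, (if f j = f j then (1:ℂ) else 0))
        = ((∑ i, er i (f i) : ℝ) : ℂ) := by
      rw [Complex.ofReal_sum]
      refine Finset.sum_congr rfl fun i _ => ?_
      rw [h1 i, mul_one, haer]
    rw [h2, powerMean_self s (hΛpos f), Complex.norm_real, Real.norm_eq_abs, sq_abs]
  -- off-diagonal values
  have hoff : ∀ f g : Fin N → Fin d, g ≠ f →
      powerMean s (Λ f) (Λ g) *
        ‖∑ i, a i (f i) (g i) *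
            ∏ j ∈ Finset.univ.erase i, (if f j = g j then (1:ℂ) else 0)‖ ^ 2
      = ∑ i, (if (∀ j, j ≠ i → f j = g j) then U f i (g i) else 0) := by
    intro f g hgf
    by_cases hex : ∃ i₀, ∀ j, j ≠ i₀ → f j = g j
    · obtain ⟨i₀, hi₀⟩ := hex
      have hne : f i₀ ≠ g i₀ := by
        intro hcon
        exact hgf (funext fun j => by
          by_cases hj : j = i₀
          · subst hj; exact hcon.symm
          · exact (hi₀ j hj).symm)
      have hLHSin : ∑ i, a i (f i) (g i) *
            ∏ j ∈ Finset.univ.erase i, (if f j = g j then (1:ℂ) else 0)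
          = a i₀ (f i₀) (g i₀) := by
        rw [Finset.sum_eq_single i₀]
        · rw [Finset.prod_eq_one fun j hj => if_pos (hi₀ j (Finset.mem_erase.mp hj).1),
            mul_one]
        · intro i _ hii₀
          rw [Finset.prod_eq_zero (Finset.mem_erase.mpr ⟨Ne.symm hii₀, Finset.mem_univ i₀⟩)
            (if_neg hne : (if f i₀ = g i₀ then (1:ℂ) else 0) = 0), mul_zero]
        · intro h; exact absurd (Finset.mem_univ i₀) h
      have hprodeq : ∏ j ∈ Finset.univ.erase i₀, lam j (g j)
          = ∏ j ∈ Finset.univ.erase i₀, lam j (f j) :=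
        Finset.prod_congr rfl fun j hj => by rw [hi₀ j (Finset.mem_erase.mp hj).1]
      have hΛf : Λ f = (∏ j ∈ Finset.univ.erase i₀, lam j (f j)) * lam i₀ (f i₀) := by
        show (∏ j, lam j (f j)) = _
        rw [← Finset.mul_prod_erase Finset.univ _ (Finset.mem_univ i₀)]; ring
      have hΛg : Λ g = (∏ j ∈ Finset.univ.erase i₀, lam j (f j)) * lam i₀ (g i₀) := by
        show (∏ j, lam j (g j)) = _
        rw [← Finset.mul_prod_erase Finset.univ _ (Finset.mem_univ i₀), ← hprodeq]; ring
      rw [hLHSin, hΛf, hΛg,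
        powerMean_smul s (Finset.prod_nonneg fun j _ => hlam j (f j))
          (hlam i₀ (f i₀)) (hlam i₀ (g i₀)),
        Finset.sum_eq_single i₀]
      · rw [if_pos hi₀, hU]; ring
      · intro i _ hii₀
        rw [if_neg]
        intro hcond
        exact hne (hcond i₀ (Ne.symm hii₀))
      · intro h; exact absurd (Finset.mem_univ i₀) h
    · push_neg at hex
      have hLHSin : ∑ i, a i (f i) (g i) *
            ∏ j ∈ Finset.univ.erase i, (if f j = g j then (1:ℂ) else 0) = 0 := by
        refine Finset.sum_eq_zero fun i _ => ?_
        obtain ⟨j, hji, hfg⟩ := hex i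
        rw [Finset.prod_eq_zero (Finset.mem_erase.mpr ⟨hji, Finset.mem_univ j⟩)
          (if_neg hfg : (if f j = g j then (1:ℂ) else 0) = 0), mul_zero]
      rw [hLHSin]
      simp only [norm_zero]
      rw [Finset.sum_eq_zero fun i _ => ?_]
      · ring
      · rw [if_neg]
        intro hcond
        obtain ⟨j, hji, hfg⟩ := hex i
        exact hfg (hcond j hji)
  -- sum over g for fixed f
  have hsum_g : ∀ f : Fin N → Fin d,
      (∑ g : Fin N → Fin d, powerMean s (Λ f) (Λ g) *
        ‖∑ i, a i (f i) (g i) *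
            ∏ j ∈ Finset.univ.erase i, (if f j = g j then (1:ℂ) else 0)‖ ^ 2)
      = Λ f * (∑ i, er i (f i)) ^ 2
        + ∑ i, ∑ m ∈ Finset.univ.erase (f i), U f i m := by
    intro f
    rw [← Finset.add_sum_erase _ _ (Finset.mem_univ f), hdiag f]
    congr 1
    rw [← sum_ite_ne f]
    have step1 : ∀ g : Fin N → Fin d,
        (if g = f then 0 else powerMean s (Λ f) (Λ g) *
          ‖∑ i, a i (f i) (g i) *
              ∏ j ∈ Finset.univ.erase i, (if f j = g j then (1:ℂ) else 0)‖ ^ 2)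
        = ∑ i, (if (∀ j, j ≠ i → f j = g j) then (if g = f then 0 else U f i (g i)) else 0) := by
      intro g
      by_cases hg : g = f
      · simp [hg]
      · rw [if_neg hg, hoff f g hg]
        refine Finset.sum_congr rfl fun i _ => ?_
        by_cases hc : ∀ j, j ≠ i → f j = g j
        · rw [if_pos hc, if_pos hc, if_neg hg]
        · rw [if_neg hc, if_neg hc]
    rw [Finset.sum_congr rfl fun g _ => step1 g, Finset.sum_comm]
    refine Finset.sum_congr rfl fun i _ => ?_
    rw [sum_update_eq (fun g => if g = f then 0 else U f i (g i))]
    have step2 : ∀ m : Fin d,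
        (if Function.update f i m = f then 0 else U f i (Function.update f i m i))
        = (if m = f i then 0 else U f i m) := by
      intro m
      rw [Function.update_self]
      by_cases hm : m = f i
      · rw [if_pos hm, if_pos (by rw [hm]; exact Function.update_eq_self i f)]
      · rw [if_neg hm, if_neg (by
          rw [Function.update_eq_self_iff]
          exact fun hc => hm hc)]
    rw [Finset.sum_congr rfl fun m _ => step2 m, sum_ite_ne]
  -- square expansion
  have hsq : ∀ f : Fin N → Fin d, (∑ i, er i (f i)) ^ 2
      = ∑ i, ((er i (f i)) ^ 2 + ∑ i' ∈ Finset.univ.erase i, er i (f i) * er i' (f i')) := by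
    intro f
    rw [sq, Finset.sum_mul_sum]
    refine Finset.sum_congr rfl fun i _ => ?_
    rw [← Finset.add_sum_erase _ _ (Finset.mem_univ i), sq]
  -- assemble
  rw [Finset.sum_congr rfl fun f _ => hsum_g f, Finset.sum_add_distrib,
    sub_add_eq_sub_sub, ← Finset.sum_sub_distrib]
  have hmain : ∀ f : Fin N → Fin d,
      Λ f * ((∑ i, qr i (f i)) + ∑ i, ∑ i' ∈ Finset.univ.erase i, er i (f i) * er i' (f i'))
        - Λ f * (∑ i, er i (f i)) ^ 2
      = ∑ i, Λ f * (qr i (f i) - (er i (f i)) ^ 2) := by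
    intro f
    rw [hsq f]
    rw [show (∑ i, qr i (f i)) + ∑ i, ∑ i' ∈ Finset.univ.erase i, er i (f i) * er i' (f i')
        = ∑ i, (qr i (f i) + ∑ i' ∈ Finset.univ.erase i, er i (f i) * er i' (f i'))
      from (Finset.sum_add_distrib).symm]
    rw [Finset.mul_sum, Finset.mul_sum, ← Finset.sum_sub_distrib]
    exact Finset.sum_congr rfl fun i _ => by ring
  rw [Finset.sum_congr rfl fun f _ => hmain f, Finset.sum_comm]
  have hswap2 : ∑ f : Fin N → Fin d, ∑ i, ∑ m ∈ Finset.univ.erase (f i), U f i m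
      = ∑ i, ∑ f : Fin N → Fin d, ∑ m ∈ Finset.univ.erase (f i), U f i m :=
    Finset.sum_comm
  rw [hswap2, ← Finset.sum_sub_distrib]
  refine Finset.sum_congr rfl fun i _ => ?_
  have e1 : ∑ f : Fin N → Fin d, Λ f * (qr i (f i) - (er i (f i)) ^ 2)
      = ∑ l, lam i l * (qr i l - (er i l) ^ 2) :=
    hred1 lam hlam hlamsum i (fun l => qr i l - (er i l) ^ 2)
  have e2 : ∑ f : Fin N → Fin d, ∑ m ∈ Finset.univ.erase (f i), U f i m
      = ∑ l, ∑ m ∈ Finset.univ.erase l,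
          powerMean s (lam i l) (lam i m) * ‖a i l m‖ ^ 2 := by
    have : ∀ f : Fin N → Fin d, ∑ m ∈ Finset.univ.erase (f i), U f i m
        = (∏ j ∈ Finset.univ.erase i, lam j (f j)) *
            (∑ m ∈ Finset.univ.erase (f i),
              powerMean s (lam i (f i)) (lam i m) * ‖a i (f i) m‖ ^ 2) := by
      intro f; rw [Finset.mul_sum]
    rw [Finset.sum_congr rfl fun f _ => this f]
    exact hred2 lam hlamsum i
      (fun l => ∑ m ∈ Finset.univ.erase l, powerMean s (lam i l) (lam i m) * ‖a i l m‖ ^ 2)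
  rw [e1, e2]
  have e3 : ∀ l, ∑ m, powerMean s (lam i l) (lam i m) * ‖a i l m‖ ^ 2
      = lam i l * (er i l) ^ 2
        + ∑ m ∈ Finset.univ.erase l,
            powerMean s (lam i l) (lam i m) * ‖a i l m‖ ^ 2 := by
    intro l
    rw [← Finset.add_sum_erase _ _ (Finset.mem_univ l), powerMean_self s (hlam i l),
      haer, Complex.norm_real, Real.norm_eq_abs, sq_abs]
  rw [Finset.sum_congr rfl fun l (_ : l ∈ Finset.univ) => e3 l, Finset.sum_add_distrib]
  rw [show ∑ l, lam i l * (qr i l - (er i l) ^ 2)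
      = ∑ l, (lam i l * qr i l - lam i l * (er i l) ^ 2)
    from Finset.sum_congr rfl fun l _ => by ring, Finset.sum_sub_distrib]
  ring

end Core

lemma conj_dot_herm {α : Type*} [Fintype α] {B : Matrix α α ℂ} (hB : B.IsHermitian)
    (u w : α → ℂ) : star (star u ⬝ᵥ (B *ᵥ w)) = star w ⬝ᵥ (B *ᵥ u) := by
  rw [← star_dotProduct_star, star_star, star_mulVec, hB.eq, ← dotProduct_mulVec]

end Stmt17Aux

/-- Additivity of the generalized Wigner–Yanase skew information:
I^s(⊗_i ρ_i, Σ_i 𝐀_i) = Σ_i I^s(ρ_i, A_i), where ρ_i = Σ_l λ_{i,l} |ψ_{i,l}⟩⟨ψ_{i,l}| are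
density matrices given by their spectral decompositions, A_i are Hermitian, and
𝐀_i = 𝕀⊗…⊗A_i⊗…⊗𝕀.  The tensor product state ⊗_i ρ_i has eigenvalues Λ(f) = Π_i λ_{i,f(i)}
and eigenvectors Ψ(f) = ⊗_i ψ_{i,f(i)}. -/
theorem stmt_17 {N d : ℕ} (s : ℝ) (hs : s ≤ 0)
    (lam : Fin N → Fin d → ℝ)
    (hlam : ∀ i l, 0 ≤ lam i l) (hlamsum : ∀ i, ∑ l, lam i l = 1)
    (ψ : Fin N → Fin d → (Fin d → ℂ))
    (horth : ∀ i l l', star (ψ i l) ⬝ᵥ ψ i l' = if l = l' then 1 else 0)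
    (A : Fin N → Matrix (Fin d) (Fin d) ℂ)
    (hA : ∀ i, (A i).IsHermitian) :
    ((((∑ f : Fin N → Fin d,
            ((∏ i, lam i (f i) : ℝ) : ℂ) •
              vecMulVec (fun x : Fin N → Fin d => ∏ i, ψ i (f i) (x i)) (star fun x : Fin N → Fin d => ∏ i, ψ i (f i) (x i)))
          * (∑ i, localOp i (A i)) * (∑ i, localOp i (A i))).trace).re
        - ∑ f : Fin N → Fin d, ∑ g : Fin N → Fin d,
            powerMean s (∏ i, lam i (f i)) (∏ i, lam i (g i)) *
              ‖(star fun x : Fin N → Fin d => ∏ i, ψ i (f i) (x i)) ⬝ᵥ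
                  ((∑ i, localOp i (A i)) *ᵥ fun x : Fin N → Fin d => ∏ i, ψ i (g i) (x i))‖ ^ 2)
      = ∑ i : Fin N,
          ((((∑ l, (lam i l : ℂ) • vecMulVec (ψ i l) (star (ψ i l))) * A i * A i).trace).re
            - ∑ l, ∑ l', powerMean s (lam i l) (lam i l') *
                ‖star (ψ i l) ⬝ᵥ (A i *ᵥ ψ i l')‖ ^ 2) := by
  classical
  have hPsi : ∀ f : Fin N → Fin d,
      (fun x : Fin N → Fin d => ∏ i, ψ i (f i) (x i)) = Stmt17Aux.P (fun j => ψ j (f j)) :=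
    fun f => rfl
  simp only [hPsi]
  rw [Stmt17Aux.trace_mix]
  have hRtr : ∀ i : Fin N,
      ((∑ l, (lam i l : ℂ) • vecMulVec (ψ i l) (star (ψ i l))) * A i * A i).trace
        = ∑ l, (lam i l : ℂ) * (star (ψ i l) ⬝ᵥ (A i *ᵥ (A i *ᵥ ψ i l))) :=
    fun i => Stmt17Aux.trace_mix _ _ _
  simp only [hRtr, Stmt17Aux.H2 ψ horth A, Stmt17Aux.H1 ψ horth A]
  -- real entries
  set er : Fin N → Fin d → ℝ := fun i l => (star (ψ i l) ⬝ᵥ (A i *ᵥ ψ i l)).re with her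
  set qr : Fin N → Fin d → ℝ := fun i l =>
    (star (ψ i l) ⬝ᵥ (A i *ᵥ (A i *ᵥ ψ i l))).re with hqr
  have haer : ∀ i l, star (ψ i l) ⬝ᵥ (A i *ᵥ ψ i l) = ((er i l : ℝ) : ℂ) := by
    intro i l
    have h := Stmt17Aux.conj_dot_herm (hA i) (ψ i l) (ψ i l)
    rw [Complex.star_def] at h
    exact (Complex.conj_eq_iff_re.mp h).symm
  have hq : ∀ i l, star (ψ i l) ⬝ᵥ (A i *ᵥ (A i *ᵥ ψ i l)) = ((qr i l : ℝ) : ℂ) := by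
    intro i l
    have h1 : star (ψ i l) ⬝ᵥ (A i *ᵥ (A i *ᵥ ψ i l))
        = star (A i *ᵥ ψ i l) ⬝ᵥ (A i *ᵥ ψ i l) := by
      rw [dotProduct_mulVec,
        show star (ψ i l) ᵥ* A i = star (A i *ᵥ ψ i l) from by
          rw [star_mulVec, (hA i).eq]]
    have h2 : (starRingEnd ℂ) (star (ψ i l) ⬝ᵥ (A i *ᵥ (A i *ᵥ ψ i l)))
        = star (ψ i l) ⬝ᵥ (A i *ᵥ (A i *ᵥ ψ i l)) := by
      rw [h1, ← Complex.star_def, (star_dotProduct (A i *ᵥ ψ i l) (A i *ᵥ ψ i l)).symm]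
    exact (Complex.conj_eq_iff_re.mp h2).symm
  simp only [hq, haer]
  -- convert the trace sum to a real sum
  have htr : (∑ f : Fin N → Fin d, ((∏ i, lam i (f i) : ℝ) : ℂ) *
        ((∑ i, ((qr i (f i) : ℝ) : ℂ))
          + ∑ i, ∑ i' ∈ Finset.univ.erase i, ((er i (f i) : ℝ) : ℂ) * ((er i' (f i') : ℝ) : ℂ))).re
      = ∑ f : Fin N → Fin d, (∏ i, lam i (f i)) *
          ((∑ i, qr i (f i)) + ∑ i, ∑ i' ∈ Finset.univ.erase i, er i (f i) * er i' (f i')) := by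
    rw [show (∑ f : Fin N → Fin d, ((∏ i, lam i (f i) : ℝ) : ℂ) *
        ((∑ i, ((qr i (f i) : ℝ) : ℂ))
          + ∑ i, ∑ i' ∈ Finset.univ.erase i, ((er i (f i) : ℝ) : ℂ) * ((er i' (f i') : ℝ) : ℂ)))
      = ((∑ f : Fin N → Fin d, (∏ i, lam i (f i)) *
          ((∑ i, qr i (f i)) + ∑ i, ∑ i' ∈ Finset.univ.erase i, er i (f i) * er i' (f i')) : ℝ) : ℂ)
      from by push_cast; ring, Complex.ofReal_re]
  rw [htr]
  -- convert per-site traces to real sums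
  have hsite : ∀ i : Fin N, (∑ l, ((lam i l : ℝ) : ℂ) * ((qr i l : ℝ) : ℂ)).re
      = ∑ l, lam i l * qr i l := by
    intro i
    rw [show (∑ l, ((lam i l : ℝ) : ℂ) * ((qr i l : ℝ) : ℂ))
        = ((∑ l, lam i l * qr i l : ℝ) : ℂ) from by push_cast; ring, Complex.ofReal_re]
  simp only [hsite]
  exact Stmt17Aux.core s lam hlam hlamsum
    (fun i l m => star (ψ i l) ⬝ᵥ (A i *ᵥ ψ i m)) er qr haer
end

section
/- Let ρ = Σ_r p_r ρ_r be a convex combination of product states on H = (ℂ^d)^{⊗N}, where each ρ_r = ⊗_{t=1}^{k} ρ^{(r)}_{Γ_t} factors along some k-partition Γ_1|...|Γ_k of {1,...,N} (depending on r). Assume: (i) I^s is convex in ρ; (ii) I^s of a product state with respect to a sum of local observables is the sum of the local skew informations; (iii) for any subset Γ of size m, Σ_{b=1}^{d+1} Σ_{n=1}^{d} I^s(ρ_Γ, 𝐏_{Γ,n}^{(b)}) ≤ m²(κ − 1/d) + m(dκ − 1). Then Σ_{b=1}^{d+1} Σ_{n=1}^{d} I^s(ρ, 𝐏_{N,n}^{(b)})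 ≤ N(dκ − 1) + [(N − k + 1)² + (k − 1)](κ − 1/d). -/
open Matrix

lemma sq_sum_key {k N : ℕ} (hk : 1 ≤ k) (hkN : k ≤ N) (f : Fin k → ℕ)
    (hf : ∀ t, 1 ≤ f t) (hsum : ∑ t, f t = N) :
    (∑ t, (f t : ℝ) ^ 2) ≤ ((N : ℝ) - k + 1) ^ 2 + ((k : ℝ) - 1) := by
  have hfa : ∀ t, (f t : ℝ) = ((f t - 1 : ℕ) : ℝ) + 1 := by
    intro t
    have h := hf t
    have h2 : f t = (f t - 1) + 1 := by omega
    conv_lhs => rw [h2]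
    push_cast
    ring
  have hsa : ∑ t, ((f t - 1 : ℕ) : ℝ) = (N : ℝ) - k := by
    have h1 : ∑ t, (f t - 1) = N - k := by
      have h2 : ∑ t, ((f t - 1) + 1) = N := by
        rw [← hsum]
        exact Finset.sum_congr rfl (fun t _ => by have := hf t; omega)
      rw [Finset.sum_add_distrib] at h2
      simp at h2
      omega
    rw [← Nat.cast_sum, h1, Nat.cast_sub hkN]
  have hnn : ∀ s, (0:ℝ) ≤ ((f s - 1 : ℕ) : ℝ) := fun s => by positivity
  have hsq : ∑ t, ((f t - 1 : ℕ) : ℝ) ^ 2 ≤ (∑ t, ((f t - 1 : ℕ) : ℝ)) ^ 2 := by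
    rw [sq (∑ t, ((f t - 1 : ℕ) : ℝ)), Finset.sum_mul_sum]
    apply Finset.sum_le_sum
    intro t _
    rw [sq]
    calc ((f t - 1 : ℕ) : ℝ) * ((f t - 1 : ℕ) : ℝ)
        ≤ ((f t - 1 : ℕ) : ℝ) * ∑ s, ((f s - 1 : ℕ) : ℝ) := by
          apply mul_le_mul_of_nonneg_left _ (hnn t)
          exact Finset.single_le_sum (f := fun s => ((f s - 1 : ℕ) : ℝ))
            (fun s _ => hnn s) (Finset.mem_univ t)
      _ = ∑ s, ((f t - 1 : ℕ) : ℝ) * ((f s - 1 : ℕ) : ℝ) := by rw [Finset.mul_sum]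
  calc ∑ t, (f t : ℝ) ^ 2
      = ∑ t, (((f t - 1 : ℕ) : ℝ) ^ 2 + 2 * ((f t - 1 : ℕ) : ℝ) + 1) := by
        exact Finset.sum_congr rfl (fun t _ => by rw [hfa t]; ring)
    _ = (∑ t, ((f t - 1 : ℕ) : ℝ) ^ 2) + 2 * (∑ t, ((f t - 1 : ℕ) : ℝ)) + k := by
        rw [Finset.sum_add_distrib, Finset.sum_add_distrib, Finset.mul_sum]
        simp
    _ ≤ (∑ t, ((f t - 1 : ℕ) : ℝ)) ^ 2 + 2 * (∑ t, ((f t - 1 : ℕ) : ℝ)) + k := by linarith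
    _ = ((N : ℝ) - k) ^ 2 + 2 * ((N : ℝ) - k) + k := by rw [hsa]
    _ = ((N : ℝ) - k + 1) ^ 2 + ((k : ℝ) - 1) := by ring


/-- Theorem 3.3, k-separability criterion: if ρ = Σ_r p_r ρ_r with each ρ_r a
product state along some k-partition (encoded by a surjection c r : Fin N → Fin k, the blocks
being the fibers), J = I^s satisfies convexity (i) and the product-state bound (ii)+(iii)
(for a product state along a partition, Σ_{b,n} J(ρ_r, 𝐏_{N,n}^{(b)}) is bounded by the sum
over the blocks Γ of |Γ|²(κ−1/d) + |Γ|(dκ−1)), then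
Σ_{b,n} J(ρ, 𝐏_{N,n}^{(b)}) ≤ N(dκ−1) + [(N−k+1)² + (k−1)](κ − 1/d). -/
theorem stmt_18 {N d k m : ℕ} (hd : 2 ≤ d) (hk : 1 ≤ k) (hkN : k ≤ N)
    (κ : ℝ) (hκ₁ : 1 / (d : ℝ) < κ) (hκ₂ : κ ≤ 1)
    (P : Fin (d + 1) → Fin d → Matrix (Fin d) (Fin d) ℂ)
    (p : Fin m → ℝ) (hp : ∀ r, 0 ≤ p r) (hp1 : ∑ r, p r = 1)
    (ρr : Fin m → Matrix (Fin N → Fin d) (Fin N → Fin d) ℂ)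
    (ρ : Matrix (Fin N → Fin d) (Fin N → Fin d) ℂ)
    (hρ : ρ = ∑ r, ((p r : ℝ) : ℂ) • ρr r)
    (c : Fin m → Fin N → Fin k) (hc : ∀ r, Function.Surjective (c r))
    (J : Matrix (Fin N → Fin d) (Fin N → Fin d) ℂ →
          Matrix (Fin N → Fin d) (Fin N → Fin d) ℂ → ℝ)
    (hconv : ∀ A, J ρ A ≤ ∑ r, p r * J (ρr r) A)
    (hbound : ∀ r : Fin m,
      ∑ b : Fin (d + 1), ∑ n : Fin d, J (ρr r) (∑ i : Fin N, localOp i (P b n))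
        ≤ ∑ t : Fin k,
            (((Finset.univ.filter (fun i : Fin N => c r i = t)).card : ℝ) ^ 2 * (κ - 1 / d)
              + ((Finset.univ.filter (fun i : Fin N => c r i = t)).card : ℝ) * (d * κ - 1))) :
    ∑ b : Fin (d + 1), ∑ n : Fin d, J ρ (∑ i : Fin N, localOp i (P b n))
      ≤ (N : ℝ) * (d * κ - 1) + (((N : ℝ) - k + 1) ^ 2 + ((k : ℝ) - 1)) * (κ - 1 / d) := by
  set RHS : ℝ := (N : ℝ) * (d * κ - 1) + (((N : ℝ) - k + 1) ^ 2 + ((k : ℝ) - 1)) * (κ - 1 / d)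
    with hRHS
  have hκd : (0:ℝ) ≤ κ - 1 / d := by linarith
  -- per-r bound
  have hper : ∀ r : Fin m,
      ∑ b : Fin (d + 1), ∑ n : Fin d, J (ρr r) (∑ i : Fin N, localOp i (P b n)) ≤ RHS := by
    intro r
    refine (hbound r).trans ?_
    set f : Fin k → ℕ := fun t => (Finset.univ.filter (fun i : Fin N => c r i = t)).card
      with hfdef
    have hf : ∀ t, 1 ≤ f t := by
      intro t
      obtain ⟨i, hi⟩ := hc r t
      have : i ∈ Finset.univ.filter (fun i : Fin N => c r i = t) := by
        simp [hi]
      exact Finset.card_pos.mpr ⟨i, this⟩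
    have hsum : ∑ t, f t = N := by
      have := Finset.card_eq_sum_card_fiberwise
        (f := c r) (s := (Finset.univ : Finset (Fin N)))
        (t := (Finset.univ : Finset (Fin k))) (fun x _ => Finset.mem_univ _)
      simpa [hfdef] using this.symm
    have hkey := sq_sum_key hk hkN f hf hsum
    have hsumR : ∑ t, (f t : ℝ) = (N : ℝ) := by
      rw [← Nat.cast_sum, hsum]
    calc ∑ t : Fin k, ((f t : ℝ) ^ 2 * (κ - 1 / d) + (f t : ℝ) * (d * κ - 1))
        = (∑ t, (f t : ℝ) ^ 2) * (κ - 1 / d) + (∑ t, (f t : ℝ)) * (d * κ - 1) := by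
          rw [Finset.sum_add_distrib, ← Finset.sum_mul, ← Finset.sum_mul]
      _ ≤ (((N : ℝ) - k + 1) ^ 2 + ((k : ℝ) - 1)) * (κ - 1 / d) + (N : ℝ) * (d * κ - 1) := by
          rw [hsumR]
          have := mul_le_mul_of_nonneg_right hkey hκd
          linarith
      _ = RHS := by rw [hRHS]; ring
  calc ∑ b : Fin (d + 1), ∑ n : Fin d, J ρ (∑ i : Fin N, localOp i (P b n))
      ≤ ∑ b : Fin (d + 1), ∑ n : Fin d, ∑ r, p r * J (ρr r) (∑ i : Fin N, localOp i (P b n)) := by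
        apply Finset.sum_le_sum; intro b _
        apply Finset.sum_le_sum; intro n _
        exact hconv _
    _ = ∑ r, p r * ∑ b : Fin (d + 1), ∑ n : Fin d, J (ρr r) (∑ i : Fin N, localOp i (P b n)) := by
        simp_rw [Finset.mul_sum]
        rw [Finset.sum_congr rfl (fun b _ => Finset.sum_comm), Finset.sum_comm]
    _ ≤ ∑ r, p r * RHS := by
        apply Finset.sum_le_sum; intro r _
        exact mul_le_mul_of_nonneg_left (hper r) (hp r)
    _ = RHS := by rw [← Finset.sum_mul, hp1, one_mul]
end
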